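/- W^{Cyril} admits the fully separable decomposition W^{Cyril} = (1/2)[ P^z_+ P^z_+ P^α_+ P^x_+ + P^z_- P^z_+ P^α_- P^x_+ + P^z_+ P^z_+ P^β_+ P^x_- + P^z_- P^z_+ P^β_- P^x_- + P^z_+ P^z_- P^β_- P^x_+ + P^z_- P^z_- P^β_+ P^x_+ + P^z_+ P^z_- P^α_- P^x_- + P^z_- P^z_- P^α_+ P^x_- ], where juxtaposition denotes tensor product; hence W^{Cyril} is separable across the partition A_I|A_O|B_I|B_O. -/

import Mathlib

open scoped BigOperators Kronecker ComplexOrder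

/-- Pauli X. -/
def sigma1 : Matrix (Fin 2) (Fin 2) ℂ := !![0, 1; 1, 0]

/-- Pauli Z. -/
def sigma3 : Matrix (Fin 2) (Fin 2) ℂ := !![1, 0; 0, -1]

/-- The process matrix
`W^{Cyril} = (1/4)[I⊗I⊗I⊗I + (1/√2)(σ³⊗σ³⊗σ³⊗I + σ³⊗I⊗σ¹⊗σ¹)]`
on `(ℂ²)^{⊗4}` with tensor factors ordered `A_I, A_O, B_I, B_O` and grouped
as `(A_I × A_O) × (B_I × B_O)`. -/
noncomputable def WCyril :
    Matrix ((Fin 2 × Fin 2) × (Fin 2 × Fin 2)) ((Fin 2 × Fin 2) × (Fin 2 × Fin 2)) ℂ :=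
  (1 / 4 : ℂ) • ((1 : Matrix ((Fin 2 × Fin 2) × (Fin 2 × Fin 2)) ((Fin 2 × Fin 2) × (Fin 2 × Fin 2)) ℂ)
    + ((Real.sqrt 2 : ℂ))⁻¹ •
      ((sigma3 ⊗ₖ sigma3) ⊗ₖ (sigma3 ⊗ₖ (1 : Matrix (Fin 2) (Fin 2) ℂ))
        + (sigma3 ⊗ₖ (1 : Matrix (Fin 2) (Fin 2) ℂ)) ⊗ₖ (sigma1 ⊗ₖ sigma1)))


noncomputable def Pz (s : Bool) : Matrix (Fin 2) (Fin 2) ℂ :=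
  (1 / 2 : ℂ) • (1 + (if s then 1 else -1 : ℂ) • sigma3)

noncomputable def Px (s : Bool) : Matrix (Fin 2) (Fin 2) ℂ :=
  (1 / 2 : ℂ) • (1 + (if s then 1 else -1 : ℂ) • sigma1)

noncomputable def Pα (s : Bool) : Matrix (Fin 2) (Fin 2) ℂ :=
  (1 / 2 : ℂ) • (1 + ((if s then 1 else -1 : ℂ) * ((Real.sqrt 2 : ℂ))⁻¹) • (sigma3 + sigma1))

noncomputable def Pβ (s : Bool) : Matrix (Fin 2) (Fin 2) ℂ :=
  (1 / 2 : ℂ) • (1 + ((if s then 1 else -1 : ℂ) * ((Real.sqrt 2 : ℂ))⁻¹) • (sigma3 - sigma1))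

/-!
Every projector here has the form `(1 + u)/2` with `u` a Hermitian involution (`±σ³`, `±σ¹`, or
`±(σ³ ± σ¹)/√2`, an involution because `σ³` and `σ¹` anticommute), so it is positive
semidefinite, and a nonnegative combination of tensor products of positive semidefinite
factors is fully separable. The decomposition itself is an identity of multilinear algebra:
expanding the eight products, the sums over the signs cancel every term except `I⊗I⊗I⊗I`
and the two correlators.
-/

open Matrix

theorem Matrix.PosSemidef.of_isStarProjection {n R : Type*} [Fintype n] [CommRing R]
    [PartialOrder R] [StarRing R] [StarOrderedRing R] {P : Matrix n n R}
    (hP : IsStarProjection P) : P.PosSemidef := by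
  have hP' : P = Pᴴ * P := by
    rw [← star_eq_conjTranspose, hP.isSelfAdjoint.star_eq, hP.isIdempotentElem.eq]
  rw [hP']
  exact posSemidef_conjTranspose_mul_self P

theorem isStarProjection_half_smul_one_add {A : Type*} [Ring A] [StarRing A] [Algebra ℂ A]
    [StarModule ℂ A] {u : A} (hu : IsSelfAdjoint u) (hu2 : u * u = 1) :
    IsStarProjection ((1 / 2 : ℂ) • (1 + u)) where
  isSelfAdjoint := IsSelfAdjoint.smul (by simp [IsSelfAdjoint]) ((IsSelfAdjoint.one A).add hu)
  isIdempotentElem := by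
    have hsq : (1 + u) * (1 + u) = (2 : ℂ) • (1 + u) := by
      rw [add_mul, mul_add, mul_add, hu2, two_smul]
      noncomm_ring
    rw [IsIdempotentElem, smul_mul_smul_comm, hsq, smul_smul]
    norm_num

theorem posSemidef_half_smul_one_add_smul {n : Type*} [Fintype n] [DecidableEq n] {c : ℂ}
    {u : Matrix n n ℂ} (hc : IsSelfAdjoint c) (hu : u.IsHermitian) (h : (c * c) • (u * u) = 1) :
    ((1 / 2 : ℂ) • (1 + c • u)).PosSemidef :=
  .of_isStarProjection <| isStarProjection_half_smul_one_add (hc.smul hu)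
    (by rw [smul_mul_smul_comm, h])

theorem add_mul_self_of_anticommute {A : Type*} [Ring A] [Algebra ℂ A] {u v : A}
    (hu : u * u = 1) (hv : v * v = 1) (huv : u * v + v * u = 0) :
    (u + v) * (u + v) = (2 : ℂ) • 1 := by
  calc (u + v) * (u + v) = u * u + v * v + (u * v + v * u) := by noncomm_ring
    _ = (2 : ℂ) • 1 := by rw [hu, hv, huv, add_zero, two_smul]

theorem sub_mul_self_of_anticommute {A : Type*} [Ring A] [Algebra ℂ A] {u v : A}
    (hu : u * u = 1) (hv : v * v = 1) (huv : u * v + v * u = 0) :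
    (u - v) * (u - v) = (2 : ℂ) • 1 := by
  calc (u - v) * (u - v) = u * u + v * v - (u * v + v * u) := by noncomm_ring
    _ = (2 : ℂ) • 1 := by rw [hu, hv, huv, sub_zero, two_smul]

section FullySeparable

variable {ι₁ ι₂ ι₃ ι₄ : Type*}

def IsFullySeparable (W : Matrix ((ι₁ × ι₂) × (ι₃ × ι₄)) ((ι₁ × ι₂) × (ι₃ × ι₄)) ℂ) : Prop :=
  ∃ (n : ℕ) (P : Fin n → Matrix ι₁ ι₁ ℂ) (Q : Fin n → Matrix ι₂ ι₂ ℂ)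
    (R : Fin n → Matrix ι₃ ι₃ ℂ) (S : Fin n → Matrix ι₄ ι₄ ℂ),
    (∀ i, (P i).PosSemidef ∧ (Q i).PosSemidef ∧ (R i).PosSemidef ∧ (S i).PosSemidef) ∧
    W = ∑ i, (P i ⊗ₖ Q i) ⊗ₖ (R i ⊗ₖ S i)

theorem isFullySeparable_kronecker {P : Matrix ι₁ ι₁ ℂ} {Q : Matrix ι₂ ι₂ ℂ}
    {R : Matrix ι₃ ι₃ ℂ} {S : Matrix ι₄ ι₄ ℂ} (hP : P.PosSemidef) (hQ : Q.PosSemidef)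
    (hR : R.PosSemidef) (hS : S.PosSemidef) : IsFullySeparable ((P ⊗ₖ Q) ⊗ₖ (R ⊗ₖ S)) :=
  ⟨1, fun _ ↦ P, fun _ ↦ Q, fun _ ↦ R, fun _ ↦ S, fun _ ↦ ⟨hP, hQ, hR, hS⟩, by simp⟩

namespace IsFullySeparable

variable {W W' : Matrix ((ι₁ × ι₂) × (ι₃ × ι₄)) ((ι₁ × ι₂) × (ι₃ × ι₄)) ℂ}

theorem add (hW : IsFullySeparable W) (hW' : IsFullySeparable W') :
    IsFullySeparable (W + W') := by
  obtain ⟨n, P, Q, R, S, hpos, rfl⟩ := hW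
  obtain ⟨n', P', Q', R', S', hpos', rfl⟩ := hW'
  refine ⟨n + n', Fin.append P P', Fin.append Q Q', Fin.append R R', Fin.append S S',
    Fin.addCases (by simpa using hpos) (by simpa using hpos'), ?_⟩
  simp [Fin.sum_univ_add]

theorem smul (hW : IsFullySeparable W) {c : ℂ} (hc : 0 ≤ c) : IsFullySeparable (c • W) := by
  obtain ⟨n, P, Q, R, S, hpos, rfl⟩ := hW
  refine ⟨n, c • P, Q, R, S, fun i ↦ ⟨(hpos i).1.smul hc, (hpos i).2⟩, ?_⟩
  simp [Finset.smul_sum, smul_kronecker]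

end IsFullySeparable

end FullySeparable

theorem sigma1_isHermitian : sigma1.IsHermitian := by
  ext i j; fin_cases i <;> fin_cases j <;> simp [sigma1]

theorem sigma3_isHermitian : sigma3.IsHermitian := by
  ext i j; fin_cases i <;> fin_cases j <;> simp [sigma3]

theorem sigma1_mul_self : sigma1 * sigma1 = 1 := by
  simp [sigma1, one_fin_two]

theorem sigma3_mul_self : sigma3 * sigma3 = 1 := by
  simp [sigma3, one_fin_two]

theorem sigma3_mul_sigma1_add_sigma1_mul_sigma3 : sigma3 * sigma1 + sigma1 * sigma3 = 0 := by
  ext i j; fin_cases i <;> fin_cases j <;> simp [sigma1, sigma3]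

theorem isSelfAdjoint_ite_one_neg_one (s : Bool) : IsSelfAdjoint (if s then 1 else -1 : ℂ) := by
  cases s <;> simp [IsSelfAdjoint]

theorem ite_one_neg_one_mul_self (s : Bool) :
    (if s then 1 else -1 : ℂ) * (if s then 1 else -1 : ℂ) = 1 := by
  cases s <;> simp

theorem isSelfAdjoint_ite_one_neg_one_mul_inv_sqrt_two (s : Bool) :
    IsSelfAdjoint ((if s then 1 else -1 : ℂ) * ((Real.sqrt 2 : ℂ))⁻¹) := by
  cases s <;> simp [IsSelfAdjoint, Complex.conj_ofReal]

theorem ite_one_neg_one_mul_inv_sqrt_two_mul_self (s : Bool) :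
    ((if s then 1 else -1 : ℂ) * ((Real.sqrt 2 : ℂ))⁻¹)
      * ((if s then 1 else -1 : ℂ) * ((Real.sqrt 2 : ℂ))⁻¹) = 1 / 2 := by
  rw [mul_mul_mul_comm, ← mul_inv, ← Complex.ofReal_mul, Real.mul_self_sqrt zero_le_two]
  cases s <;> norm_num

theorem Pz_posSemidef (s : Bool) : (Pz s).PosSemidef :=
  posSemidef_half_smul_one_add_smul (isSelfAdjoint_ite_one_neg_one s) sigma3_isHermitian
    (by rw [ite_one_neg_one_mul_self, sigma3_mul_self, one_smul])

theorem Px_posSemidef (s : Bool) : (Px s).PosSemidef :=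
  posSemidef_half_smul_one_add_smul (isSelfAdjoint_ite_one_neg_one s) sigma1_isHermitian
    (by rw [ite_one_neg_one_mul_self, sigma1_mul_self, one_smul])

theorem Pα_posSemidef (s : Bool) : (Pα s).PosSemidef :=
  posSemidef_half_smul_one_add_smul (isSelfAdjoint_ite_one_neg_one_mul_inv_sqrt_two s)
    (sigma3_isHermitian.add sigma1_isHermitian)
    (by rw [ite_one_neg_one_mul_inv_sqrt_two_mul_self, add_mul_self_of_anticommute
      sigma3_mul_self sigma1_mul_self sigma3_mul_sigma1_add_sigma1_mul_sigma3, smul_smul]; norm_num)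

theorem Pβ_posSemidef (s : Bool) : (Pβ s).PosSemidef :=
  posSemidef_half_smul_one_add_smul (isSelfAdjoint_ite_one_neg_one_mul_inv_sqrt_two s)
    (sigma3_isHermitian.sub sigma1_isHermitian)
    (by rw [ite_one_neg_one_mul_inv_sqrt_two_mul_self, sub_mul_self_of_anticommute
      sigma3_mul_self sigma1_mul_self sigma3_mul_sigma1_add_sigma1_mul_sigma3, smul_smul]; norm_num)

theorem WCyril_eq_sum_kronecker :
    WCyril = (1 / 2 : ℂ) •
      ( (Pz true  ⊗ₖ Pz true)  ⊗ₖ (Pα true  ⊗ₖ Px true)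
      + (Pz false ⊗ₖ Pz true)  ⊗ₖ (Pα false ⊗ₖ Px true)
      + (Pz true  ⊗ₖ Pz true)  ⊗ₖ (Pβ true  ⊗ₖ Px false)
      + (Pz false ⊗ₖ Pz true)  ⊗ₖ (Pβ false ⊗ₖ Px false)
      + (Pz true  ⊗ₖ Pz false) ⊗ₖ (Pβ false ⊗ₖ Px true)
      + (Pz false ⊗ₖ Pz false) ⊗ₖ (Pβ true  ⊗ₖ Px true)
      + (Pz true  ⊗ₖ Pz false) ⊗ₖ (Pα false ⊗ₖ Px false)
      + (Pz false ⊗ₖ Pz false) ⊗ₖ (Pα true  ⊗ₖ Px false) ) := by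
  have hsub : sigma3 - sigma1 = sigma3 + (-1 : ℂ) • sigma1 := by module
  simp only [WCyril, Pz, Px, Pα, Pβ, if_true, Bool.false_eq_true, if_false, hsub]
  -- Only positivity needs the weight to be `1/√2`; the identity holds for every weight.
  generalize ((Real.sqrt 2 : ℂ))⁻¹ = c
  simp only [smul_add, add_kronecker, kronecker_add, smul_kronecker, kronecker_smul, smul_smul,
    one_kronecker_one]
  module

/-- `W^{Cyril}` admits the fully separable decomposition into the eight listed
tensor products of rank-one projectors; hence it is separable across
`A_I|A_O|B_I|B_O` (a finite sum of tensor products of positive semidefinite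
one-qubit operators). -/
theorem WCyril_fully_separable :
    WCyril = (1 / 2 : ℂ) •
      ( (Pz true  ⊗ₖ Pz true)  ⊗ₖ (Pα true  ⊗ₖ Px true)
      + (Pz false ⊗ₖ Pz true)  ⊗ₖ (Pα false ⊗ₖ Px true)
      + (Pz true  ⊗ₖ Pz true)  ⊗ₖ (Pβ true  ⊗ₖ Px false)
      + (Pz false ⊗ₖ Pz true)  ⊗ₖ (Pβ false ⊗ₖ Px false)
      + (Pz true  ⊗ₖ Pz false) ⊗ₖ (Pβ false ⊗ₖ Px true)
      + (Pz false ⊗ₖ Pz false) ⊗ₖ (Pβ true  ⊗ₖ Px true)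
      + (Pz true  ⊗ₖ Pz false) ⊗ₖ (Pα false ⊗ₖ Px false)
      + (Pz false ⊗ₖ Pz false) ⊗ₖ (Pα true  ⊗ₖ Px false) ) ∧
    ∃ (n : ℕ) (P Q R S : Fin n → Matrix (Fin 2) (Fin 2) ℂ),
      (∀ i, (P i).PosSemidef ∧ (Q i).PosSemidef ∧ (R i).PosSemidef ∧ (S i).PosSemidef) ∧
      WCyril = ∑ i, (P i ⊗ₖ Q i) ⊗ₖ (R i ⊗ₖ S i) := by
  refine ⟨WCyril_eq_sum_kronecker, ?_⟩
  change IsFullySeparable WCyril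
  rw [WCyril_eq_sum_kronecker]
  refine .smul ?_ (by positivity)
  repeat' refine IsFullySeparable.add ?_ ?_
  all_goals
    refine isFullySeparable_kronecker (Pz_posSemidef _) (Pz_posSemidef _) ?_ (Px_posSemidef _)
    -- `with_reducible` stops `exact` from unfolding `Pα s` against `Pβ s`, which times out.
    with_reducible first | exact Pα_posSemidef _ | exact Pβ_posSemidef _
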